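/- Let m ≥ 1 and let λ = [λ₁,λ₂] be a Young diagram of size m with at most two rows, and set ν₁ = 2λ₁ − m. Then the number of oscillating tableaux of length m and shape [ν₁] (the one-row diagram with ν₁ boxes) all of whose intermediate shapes lie in Γ(∞) equals the binomial coefficient C(|𝒯(λ)| + 1, 2), where |𝒯(λ)| is the number of standard Young tableaux of shape λ. -/

import Mathlib

/-- `AddBox μ ν` means `ν` is obtained from `μ` by adding a single box (`μ → ν`). -/
def AddBox (μ ν : YoungDiagram) : Prop := μ ≤ ν ∧ ν.card = μ.card + 1

/-- `AdjBox μ ν` means `μ ↔ ν`, i.e. the diagrams differ by a single box. -/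
def AdjBox (μ ν : YoungDiagram) : Prop := AddBox μ ν ∨ AddBox ν μ

/-- `RowsEq μ L` means the row lengths of `μ` are given by the list `L`
(rows beyond the length of `L` being empty). -/
def RowsEq (μ : YoungDiagram) (L : List ℕ) : Prop := ∀ i, μ.rowLen i = L.getD i 0

/-- `Λ(j,ℓ)`: Young diagrams of size `j` with at most two rows whose
row difference is at most `ℓ - 2`. -/
def LambdaSet (j ℓ : ℕ) : Set YoungDiagram :=
  {μ | μ.card = j ∧ μ.rowLen 2 = 0 ∧ μ.rowLen 0 - μ.rowLen 1 ≤ ℓ - 2}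

/-- `Γ(ℓ)` for a finite `ℓ ≥ 6`. -/
def GammaSet (ℓ : ℕ) : Set YoungDiagram :=
  {μ | μ.colLen 0 + μ.colLen 1 ≤ 4 ∧ μ.rowLen 0 + μ.rowLen 1 ≤ ℓ - 2}
    ∪ {μ | RowsEq μ [ℓ - 2, 1, 1]}

/-- `Γ(∞)`: diagrams whose first two column lengths sum to at most `4`. -/
def GammaInf : Set YoungDiagram := {μ | μ.colLen 0 + μ.colLen 1 ≤ 4}

/-- A Young-tableau path of length `m`, with the `j`-th shape restricted to lie in `P j`. -/
def IsTabPath (P : ℕ → Set YoungDiagram) (m : ℕ) (f : Fin (m + 1) → YoungDiagram) : Prop :=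
  f 0 = ⊥ ∧ (∀ j : Fin m, AddBox (f j.castSucc) (f j.succ)) ∧
    ∀ j : Fin (m + 1), f j ∈ P (j : ℕ)

/-- An oscillating-tableau path of length `m` with all shapes in `Γ`. -/
def IsOscPath (Γ : Set YoungDiagram) (m : ℕ) (f : Fin (m + 1) → YoungDiagram) : Prop :=
  f 0 = ⊥ ∧ (∀ j : Fin m, AdjBox (f j.castSucc) (f j.succ)) ∧
    ∀ j : Fin (m + 1), f j ∈ Γ

/-- The number of Young tableaux (paths) of length `m`, with shapes restricted by `P`,
whose final shape has row lengths `L`. -/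
noncomputable def tabCount (P : ℕ → Set YoungDiagram) (m : ℕ) (L : List ℕ) : ℕ :=
  Nat.card {f : Fin (m + 1) → YoungDiagram //
    IsTabPath P m f ∧ RowsEq (f (Fin.last m)) L}

/-- The number of oscillating tableaux of length `m` with shapes in `Γ`
whose final shape has row lengths `L`. -/
noncomputable def oscCount (Γ : Set YoungDiagram) (m : ℕ) (L : List ℕ) : ℕ :=
  Nat.card {f : Fin (m + 1) → YoungDiagram //
    IsOscPath Γ m f ∧ RowsEq (f (Fin.last m)) L}

/-- The number of oscillating tableaux of length `m` with shapes in `Γ` and final shape `ν`. -/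
noncomputable def oscCountD (Γ : Set YoungDiagram) (m : ℕ) (ν : YoungDiagram) : ℕ :=
  Nat.card {f : Fin (m + 1) → YoungDiagram //
    IsOscPath Γ m f ∧ f (Fin.last m) = ν}

/-!
A diagram of `Γ(∞)` has at most four rows: it is a row `[a]`, a two-row diagram `[p, q]`, a hook
`[a, 1, 1]` or the column `[1, 1, 1, 1]`. An oscillating tableau in `Γ(∞)` is therefore a walk on
the vectors of the first four row lengths, and these walks can be counted by recursion on the last
step. Let `B_j(a)` be the number of `±1`-walks of length `j` in `ℕ` from `0` to `a`. By induction
on `j`, the number of walks of length `j` from `∅` ending at `[p, q]` is `B_j(p + q) B_j(p - q)`,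
at `[a]` it is `C(B_j(a) + 1, 2)`, at `[a, 1, 1]` it is `C(B_j(a), 2)` and at `[1, 1, 1, 1]` it is
`C(B_j(0), 2)`: the tableau behaves like a pair of ballot walks, ordered for two rows, unordered
at a row and distinct at a hook. The same recursion gives `|𝒯([λ₁, λ₂])| = B_m(λ₁ - λ₂)`, and
`ν₁ = λ₁ - λ₂`.
-/

section RelPath

variable {α : Type*} (R : α → α → Prop)

def RelPath (a : α) (j : ℕ) (b : α) : Type _ :=
  {g : Fin (j + 1) → α //
    g 0 = a ∧ (∀ k : Fin j, R (g k.castSucc) (g k.succ)) ∧ g (Fin.last j) = b}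

noncomputable def pathCount (a : α) (j : ℕ) (b : α) : ℕ := Nat.card (RelPath R a j b)

instance (a b : α) : Subsingleton (RelPath R a 0 b) :=
  ⟨fun g h => Subtype.ext <| funext fun k => by rw [Fin.fin_one_eq_zero k, g.2.1, h.2.1]⟩

def relPathSuccEquiv (a : α) (j : ℕ) (b : α) :
    RelPath R a (j + 1) b ≃ Σ t : {t // R t b}, RelPath R a j t where
  toFun g := ⟨⟨g.1 (Fin.last j).castSucc, by
      have h := g.2.2.1 (Fin.last j)
      rwa [Fin.succ_last, g.2.2.2] at h⟩,
    ⟨Fin.init g.1, g.2.1, fun k => by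
      simpa only [Fin.init, Fin.succ_castSucc] using g.2.2.1 k.castSucc, rfl⟩⟩
  invFun p := ⟨Fin.snoc p.2.1 b,
      (Fin.snoc_castSucc (α := fun _ => α) b p.2.1 0).trans p.2.2.1, fun k => by
      induction k using Fin.lastCases with
      | last => simpa [p.2.2.2.2] using p.1.2
      | cast k =>
        rw [Fin.succ_castSucc, Fin.snoc_castSucc, Fin.snoc_castSucc]
        exact p.2.2.2.1 k, by simp⟩
  left_inv g := Subtype.ext <|
    (congrArg (Fin.snoc (α := fun _ => α) (Fin.init g.1)) g.2.2.2.symm).trans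
      (Fin.snoc_init_self g.1)
  right_inv p := Sigma.subtype_ext (Subtype.ext (by simpa using p.2.2.2.2))
    (Fin.init_snoc (α := fun _ => α) b p.2.1)

variable {R}

theorem pathCount_zero [DecidableEq α] (a b : α) :
    pathCount R a 0 b = if b = a then 1 else 0 := by
  split_ifs with h
  · subst h
    exact @Nat.card_unique _ ⟨⟨fun _ => b, rfl, Fin.elim0, rfl⟩⟩ _
  · exact @Nat.card_of_isEmpty _ ⟨fun g => h (g.2.2.2.symm.trans g.2.1)⟩

theorem finite_relPath (hR : ∀ b, {t | R t b}.Finite) (a : α) (j : ℕ) (b : α) :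
    Finite (RelPath R a j b) := by
  induction j generalizing b with
  | zero => infer_instance
  | succ j ih =>
    have : Finite {t // R t b} := (hR b).to_subtype
    exact Finite.of_equiv _ (relPathSuccEquiv R a j b).symm

theorem pathCount_succ (hR : ∀ b, {t | R t b}.Finite) {a b : α} {j : ℕ} (F : Finset α)
    (hF : ∀ t, R t b ↔ t ∈ F) : pathCount R a (j + 1) b = ∑ t ∈ F, pathCount R a j t := by
  have := finite_relPath hR a j
  have : Fintype {t // R t b} := (hR b).fintype
  rw [pathCount, Nat.card_congr (relPathSuccEquiv R a j b), Nat.card_sigma,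
    Finset.sum_subtype F fun t => (hF t).symm]
  rfl

theorem card_paths_eq_pathCount_of_injOn {β : Type*} {R' : β → β → Prop} {φ : α → β}
    {S : Set α} (hφ : S.InjOn φ) (hR : ∀ x ∈ S, ∀ y ∈ S, R x y ↔ R' (φ x) (φ y))
    (hR' : ∀ s t, R' s t → t ∈ φ '' S) {a : α} (ha : a ∈ S) {P : α → Prop} {c : β}
    (hP : ∀ x ∈ S, P x ↔ φ x = c) (j : ℕ) :
    Nat.card {f : Fin (j + 1) → α // (f 0 = a ∧ (∀ k : Fin j, R (f k.castSucc) (f k.succ)) ∧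
      ∀ k, f k ∈ S) ∧ P (f (Fin.last j))} = pathCount R' (φ a) j c := by
  refine Nat.card_eq_of_bijective (fun f => ⟨φ ∘ f.1, by simp [f.2.1.1],
    fun k => (hR _ (f.2.1.2.2 _) _ (f.2.1.2.2 _)).1 (f.2.1.2.1 k),
    (hP _ (f.2.1.2.2 _)).1 f.2.2⟩) ⟨fun f g h => ?_, fun g => ?_⟩
  · exact Subtype.ext <| funext fun k =>
      hφ (f.2.1.2.2 k) (g.2.1.2.2 k) (congrFun (congrArg Subtype.val h) k)
  · have hg : ∀ k, ∃ x ∈ S, φ x = g.1 k :=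
      Fin.cases ⟨a, ha, g.2.1.symm⟩ fun k => hR' _ _ (g.2.2.1 k)
    choose f hfS hf using hg
    refine ⟨⟨f, ⟨hφ (hfS 0) ha (by rw [hf, g.2.1]), fun k => ?_, hfS⟩, ?_⟩,
      Subtype.ext (funext hf)⟩
    · rw [hR _ (hfS _) _ (hfS _), hf, hf]
      exact g.2.2.1 k
    · rw [hP _ (hfS _), hf, g.2.2.2]

end RelPath

namespace YoungDiagram

theorem lt_colLen_iff_lt_rowLen {μ : YoungDiagram} {i j : ℕ} :
    i < μ.colLen j ↔ j < μ.rowLen i :=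
  mem_iff_lt_colLen.symm.trans mem_iff_lt_rowLen

theorem ext_rowLen {μ ν : YoungDiagram} (h : ∀ i, μ.rowLen i = ν.rowLen i) : μ = ν := by
  ext ⟨i, j⟩
  simp only [mem_cells, mem_iff_lt_rowLen, h]

theorem le_iff_rowLen_le {μ ν : YoungDiagram} : μ ≤ ν ↔ ∀ i, μ.rowLen i ≤ ν.rowLen i := by
  constructor
  · exact fun h i => forall_lt_iff_le.1 fun j hj =>
      mem_iff_lt_rowLen.1 (h (mem_iff_lt_rowLen.2 hj))
  · rintro h ⟨i, j⟩ hc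
    exact mem_iff_lt_rowLen.2 ((mem_iff_lt_rowLen.1 hc).trans_le (h i))

theorem card_eq_sum_rowLen {μ : YoungDiagram} {n : ℕ} (hn : μ.rowLen n = 0) :
    μ.card = ∑ i ∈ Finset.range n, μ.rowLen i := by
  rw [YoungDiagram.card, Finset.card_eq_sum_card_fiberwise (f := Prod.fst) (t := Finset.range n)]
  · simp only [rowLen_eq_card, row]
  · rintro ⟨i, j⟩ hc
    have := mem_iff_lt_rowLen.1 hc
    exact Finset.mem_range.2 (lt_of_not_ge fun hi => by have := μ.rowLen_anti n i hi; omega)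

theorem rowLen_ofRowLens_eq_getD {w : List ℕ} {hw : w.SortedGE} (i : ℕ) :
    (ofRowLens w hw).rowLen i = w.getD i 0 := by
  refine eq_of_forall_lt_iff fun j => ?_
  rw [← mem_iff_lt_rowLen, mem_ofRowLens]
  rcases lt_or_ge i w.length with hi | hi
  · simp [hi]
  · simp [hi.not_gt]

end YoungDiagram

open YoungDiagram

def rowLens4 (μ : YoungDiagram) : ℕ × ℕ × ℕ × ℕ :=
  (μ.rowLen 0, μ.rowLen 1, μ.rowLen 2, μ.rowLen 3)

def rowSum (s : ℕ × ℕ × ℕ × ℕ) : ℕ := s.1 + s.2.1 + s.2.2.1 + s.2.2.2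

/-- The first four row lengths of the diagrams in `Γ(∞)`. -/
def IsGammaRows (s : ℕ × ℕ × ℕ × ℕ) : Prop :=
  s.2.1 ≤ s.1 ∧ s.2.2.1 ≤ s.2.1 ∧ s.2.2.2 ≤ s.2.2.1 ∧
    (0 < s.2.2.1 → s.2.1 ≤ 1) ∧ (0 < s.2.2.2 → s.1 ≤ 1)

def GammaAdd (s t : ℕ × ℕ × ℕ × ℕ) : Prop :=
  IsGammaRows s ∧ IsGammaRows t ∧ s ≤ t ∧ rowSum t = rowSum s + 1

def GammaAdj (s t : ℕ × ℕ × ℕ × ℕ) : Prop := GammaAdd s t ∨ GammaAdd t s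

theorem mem_gammaInf_iff {μ : YoungDiagram} :
    μ ∈ GammaInf ↔ μ.rowLen 4 = 0 ∧ IsGammaRows (rowLens4 μ) := by
  have c0 : ∀ i, i < μ.colLen 0 ↔ 0 < μ.rowLen i := fun _ => lt_colLen_iff_lt_rowLen
  have c1 : ∀ i, i < μ.colLen 1 ↔ 1 < μ.rowLen i := fun _ => lt_colLen_iff_lt_rowLen
  have := μ.colLen_anti 0 1 zero_le_one
  have := μ.rowLen_anti 0 1 zero_le_one
  have := μ.rowLen_anti 1 2 one_le_two
  have := μ.rowLen_anti 2 3 (by norm_num)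
  -- `colLen 0 + colLen 1 ≤ 4` fails exactly when `colLen 0 ≥ 5`, or `colLen 0 ≥ 4` and
  -- `colLen 1 ≥ 1`, or `colLen 0 ≥ 3` and `colLen 1 ≥ 2`; these read off the row lengths.
  have := c0 2
  have := c0 3
  have := c0 4
  have := c1 0
  have := c1 1
  simp only [GammaInf, Set.mem_ofPred_eq, IsGammaRows, rowLens4]
  omega

theorem mem_gammaInf_of_rowLen_two_eq_zero {μ : YoungDiagram} (h : μ.rowLen 2 = 0) :
    μ ∈ GammaInf := by
  have := μ.rowLen_anti 0 1 zero_le_one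
  have := μ.rowLen_anti 2 3 (by norm_num)
  have := μ.rowLen_anti 2 4 (by norm_num)
  simp only [mem_gammaInf_iff, IsGammaRows, rowLens4]
  omega

theorem rowLen_eq_zero_of_mem_gammaInf {μ : YoungDiagram} (hμ : μ ∈ GammaInf) {i : ℕ}
    (hi : 4 ≤ i) : μ.rowLen i = 0 :=
  Nat.eq_zero_of_le_zero ((μ.rowLen_anti 4 i hi).trans (mem_gammaInf_iff.1 hμ).1.le)

theorem injOn_rowLens4 : GammaInf.InjOn rowLens4 := fun μ hμ ν hν h => by
  simp only [rowLens4, Prod.mk.injEq] at h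
  refine ext_rowLen fun i => ?_
  rcases lt_or_ge i 4 with hi | hi
  · interval_cases i <;> tauto
  · rw [rowLen_eq_zero_of_mem_gammaInf hμ hi, rowLen_eq_zero_of_mem_gammaInf hν hi]

theorem card_eq_rowSum_rowLens4 {μ : YoungDiagram} (hμ : μ ∈ GammaInf) :
    μ.card = rowSum (rowLens4 μ) := by
  rw [card_eq_sum_rowLen (mem_gammaInf_iff.1 hμ).1]
  simp [Finset.sum_range_succ, rowSum, rowLens4]

theorem addBox_iff_gammaAdd {μ ν : YoungDiagram} (hμ : μ ∈ GammaInf) (hν : ν ∈ GammaInf) :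
    AddBox μ ν ↔ GammaAdd (rowLens4 μ) (rowLens4 ν) := by
  have le_iff : μ ≤ ν ↔ rowLens4 μ ≤ rowLens4 ν := by
    simp only [le_iff_rowLen_le, rowLens4, Prod.mk_le_mk]
    refine ⟨fun h => ⟨h 0, h 1, h 2, h 3⟩, fun h i => ?_⟩
    rcases lt_or_ge i 4 with hi | hi
    · interval_cases i <;> tauto
    · simp [rowLen_eq_zero_of_mem_gammaInf hμ hi]
  simp only [AddBox, GammaAdd, le_iff, card_eq_rowSum_rowLens4 hμ, card_eq_rowSum_rowLens4 hν,
    (mem_gammaInf_iff.1 hμ).2, (mem_gammaInf_iff.1 hν).2, true_and]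

theorem adjBox_iff_gammaAdj {μ ν : YoungDiagram} (hμ : μ ∈ GammaInf) (hν : ν ∈ GammaInf) :
    AdjBox μ ν ↔ GammaAdj (rowLens4 μ) (rowLens4 ν) := by
  rw [AdjBox, GammaAdj, addBox_iff_gammaAdd hμ hν, addBox_iff_gammaAdd hν hμ]

theorem mem_image_rowLens4_of_isGammaRows {s : ℕ × ℕ × ℕ × ℕ} (hs : IsGammaRows s) :
    s ∈ rowLens4 '' GammaInf := by
  obtain ⟨a, b, c, d⟩ := s
  have hw : [a, b, c, d].SortedGE := by
    obtain ⟨h1, h2, h3, -⟩ := hs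
    dsimp only at h1 h2 h3
    simp only [List.sortedGE_iff_pairwise, List.pairwise_cons, List.mem_cons, List.not_mem_nil,
      or_false, forall_eq_or_imp, forall_eq, IsEmpty.forall_iff, implies_true, List.Pairwise.nil,
      and_true]
    omega
  refine ⟨ofRowLens _ hw, ?_, ?_⟩
  · rw [mem_gammaInf_iff]
    simpa [rowLen_ofRowLens_eq_getD, rowLens4] using hs
  · simp [rowLen_ofRowLens_eq_getD, rowLens4]

theorem rowsEq_iff_rowLens4_eq {μ : YoungDiagram} (hμ : μ ∈ GammaInf) {L : List ℕ}
    (hL : L.length ≤ 4) :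
    RowsEq μ L ↔ rowLens4 μ = (L.getD 0 0, L.getD 1 0, L.getD 2 0, L.getD 3 0) := by
  refine ⟨fun h => by simp only [rowLens4, h 0, h 1, h 2, h 3], fun h i => ?_⟩
  simp only [rowLens4, Prod.mk.injEq] at h
  rcases lt_or_ge i 4 with hi | hi
  · interval_cases i <;> tauto
  · rw [rowLen_eq_zero_of_mem_gammaInf hμ hi, List.getD_eq_default _ _ (hL.trans hi)]

theorem rowLens4_bot : rowLens4 ⊥ = 0 := by
  have h : ∀ i, (⊥ : YoungDiagram).rowLen i = 0 := fun i =>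
    Nat.eq_zero_of_not_pos fun h => notMem_bot _ (mem_iff_lt_rowLen.2 h)
  simp [rowLens4, h]

theorem bot_mem_gammaInf : ⊥ ∈ GammaInf :=
  mem_gammaInf_of_rowLen_two_eq_zero (congrArg (·.2.2.1) rowLens4_bot)

theorem IsTabPath.mem_gammaInf {P : ℕ → Set YoungDiagram} {m l₁ l₂ : ℕ}
    {f : Fin (m + 1) → YoungDiagram} (hf : IsTabPath P m f)
    (hL : RowsEq (f (Fin.last m)) [l₁, l₂]) (k : Fin (m + 1)) : f k ∈ GammaInf := by
  have hmono : Monotone f := Fin.monotone_iff_le_succ.2 fun k => (hf.2.1 k).1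
  apply mem_gammaInf_of_rowLen_two_eq_zero
  have := le_iff_rowLen_le.1 (hmono (Fin.le_last k)) 2
  have := hL 2
  simp_all

theorem oscCount_gammaInf_eq_pathCount (m n : ℕ) :
    oscCount GammaInf m [n] = pathCount GammaAdj 0 m (n, 0, 0, 0) := by
  rw [oscCount, ← rowLens4_bot]
  exact card_paths_eq_pathCount_of_injOn injOn_rowLens4
    (fun _ hμ _ hν => adjBox_iff_gammaAdj hμ hν)
    (fun _ _ h => mem_image_rowLens4_of_isGammaRows (h.elim (·.2.1) (·.1))) bot_mem_gammaInf
    (fun _ hμ => rowsEq_iff_rowLens4_eq hμ (by simp)) m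

theorem tabCount_eq_pathCount (m l₁ l₂ : ℕ) :
    tabCount (fun _ => Set.univ) m [l₁, l₂] = pathCount GammaAdd 0 m (l₁, l₂, 0, 0) := by
  rw [tabCount, ← rowLens4_bot]
  refine (Nat.card_congr (Equiv.subtypeEquivRight fun f => ⟨fun h => ?_, fun h => ?_⟩)).trans
    (card_paths_eq_pathCount_of_injOn injOn_rowLens4
      (fun _ hμ _ hν => addBox_iff_gammaAdd hμ hν)
      (fun _ _ h => mem_image_rowLens4_of_isGammaRows h.2.1) bot_mem_gammaInf
      (P := fun μ => RowsEq μ [l₁, l₂]) (fun _ hμ => rowsEq_iff_rowLens4_eq hμ (by simp)) m)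
  · exact ⟨⟨h.1.1, h.1.2.1, h.1.mem_gammaInf h.2⟩, h.2⟩
  · exact ⟨⟨h.1.1, h.1.2.1, fun _ => Set.mem_univ _⟩, h.2⟩

/-- Truncated subtraction makes `s - eᵢ = s` when the `i`-th coordinate vanishes; this is
harmless since no vector is adjacent to itself. -/
def unitNeighbor (s : ℕ × ℕ × ℕ × ℕ) : Fin 8 → ℕ × ℕ × ℕ × ℕ :=
  let (a, b, c, d) := s
  ![(a + 1, b, c, d), (a, b + 1, c, d), (a, b, c + 1, d), (a, b, c, d + 1),
    (a - 1, b, c, d), (a, b - 1, c, d), (a, b, c - 1, d), (a, b, c, d - 1)]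

theorem exists_unitNeighbor_eq_of_le {s t : ℕ × ℕ × ℕ × ℕ} (hle : s ≤ t)
    (hsum : rowSum t = rowSum s + 1) :
    (∃ i, unitNeighbor s i = t) ∧ ∃ i, unitNeighbor t i = s := by
  obtain ⟨a, b, c, d⟩ := s
  obtain ⟨x, y, z, w⟩ := t
  simp only [Prod.mk_le_mk, rowSum] at hle hsum
  have : (x = a + 1 ∧ y = b ∧ z = c ∧ w = d) ∨ (x = a ∧ y = b + 1 ∧ z = c ∧ w = d) ∨
      (x = a ∧ y = b ∧ z = c + 1 ∧ w = d) ∨ (x = a ∧ y = b ∧ z = c ∧ w = d + 1) := by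
    omega
  rcases this with ⟨rfl, rfl, rfl, rfl⟩ | ⟨rfl, rfl, rfl, rfl⟩ | ⟨rfl, rfl, rfl, rfl⟩ |
    ⟨rfl, rfl, rfl, rfl⟩
  exacts [⟨⟨0, by simp [unitNeighbor]⟩, ⟨4, by simp [unitNeighbor]⟩⟩,
    ⟨⟨1, by simp [unitNeighbor]⟩, ⟨5, by simp [unitNeighbor]⟩⟩,
    ⟨⟨2, by simp [unitNeighbor]⟩, ⟨6, by simp [unitNeighbor]⟩⟩,
    ⟨⟨3, by simp [unitNeighbor]⟩, ⟨7, by simp [unitNeighbor]⟩⟩]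

theorem GammaAdd.ne_and_exists_unitNeighbor {s t : ℕ × ℕ × ℕ × ℕ} (h : GammaAdd t s) :
    t ≠ s ∧ ∃ i, unitNeighbor s i = t :=
  ⟨fun hts => by simpa [hts] using h.2.2.2, (exists_unitNeighbor_eq_of_le h.2.2.1 h.2.2.2).2⟩

theorem GammaAdj.ne_and_exists_unitNeighbor {s t : ℕ × ℕ × ℕ × ℕ} (h : GammaAdj t s) :
    t ≠ s ∧ ∃ i, unitNeighbor s i = t :=
  h.elim GammaAdd.ne_and_exists_unitNeighbor fun h =>
    ⟨fun hts => by simpa [hts] using h.2.2.2, (exists_unitNeighbor_eq_of_le h.2.2.1 h.2.2.2).1⟩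

open Classical in
theorem pathCount_succ_eq_sum_unitNeighbor {R : ℕ × ℕ × ℕ × ℕ → ℕ × ℕ × ℕ × ℕ → Prop}
    (hR : ∀ t s, R t s → t ≠ s ∧ ∃ i, unitNeighbor s i = t) (a : ℕ × ℕ × ℕ × ℕ) (j : ℕ)
    (s : ℕ × ℕ × ℕ × ℕ) :
    pathCount R a (j + 1) s =
      ∑ i, if R (unitNeighbor s i) s then pathCount R a j (unitNeighbor s i) else 0 := by
  have hfin : ∀ s, {t | R t s}.Finite := fun s =>
    (Set.finite_range (unitNeighbor s)).subset fun t ht => (hR t s ht).2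
  have hinj : Set.InjOn (unitNeighbor s) {i | R (unitNeighbor s i) s} := by
    intro i hi i' _ h
    have := (hR _ _ hi).1
    obtain ⟨a, b, c, d⟩ := s
    fin_cases i <;> fin_cases i' <;> simp [unitNeighbor, Prod.ext_iff] at h this ⊢ <;> omega
  rw [pathCount_succ hfin
      ((Finset.univ.filter fun i => R (unitNeighbor s i) s).image (unitNeighbor s)) ?_,
    Finset.sum_image (by simpa using hinj), Finset.sum_filter]
  intro t
  simp only [Finset.mem_image, Finset.mem_filter, Finset.mem_univ, true_and]
  refine ⟨fun h => ?_, ?_⟩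
  · obtain ⟨i, rfl⟩ := (hR t s h).2
    exact ⟨i, h, rfl⟩
  · rintro ⟨i, hi, rfl⟩
    exact hi

/-- `ballot j a` is the number of walks of `j` steps `±1` in `ℕ` from `0` to `a`. -/
def ballot : ℕ → ℤ → ℕ
  | 0, a => if a = 0 then 1 else 0
  | j + 1, a => if a < 0 then 0 else ballot j (a - 1) + ballot j (a + 1)

theorem ballot_succ_of_nonneg {j : ℕ} {a : ℤ} (ha : 0 ≤ a) :
    ballot (j + 1) a = ballot j (a - 1) + ballot j (a + 1) := by
  rw [ballot, if_neg ha.not_gt]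

theorem ballot_of_neg {j : ℕ} {a : ℤ} (ha : a < 0) : ballot j a = 0 := by
  cases j with
  | zero => rw [ballot, if_neg ha.ne]
  | succ j => rw [ballot, if_pos ha]

theorem ballot_eq_zero_of_lt {j : ℕ} {a : ℤ} (h : j < a) : ballot j a = 0 := by
  induction j generalizing a with
  | zero => rw [ballot, if_neg (by omega)]
  | succ j ih => rw [ballot_succ_of_nonneg (by omega), ih (by omega), ih (by omega)]

theorem pathCount_gammaAdd_eq_ballot {j p q : ℕ} (hqp : q ≤ p) (hj : p + q = j) :
    pathCount GammaAdd 0 j (p, q, 0, 0) = ballot j (p - q : ℤ) := by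
  induction j generalizing p q with
  | zero =>
    obtain ⟨rfl, rfl⟩ : p = 0 ∧ q = 0 := by omega
    simp [pathCount_zero, ballot]
  | succ j ih =>
    rw [pathCount_succ_eq_sum_unitNeighbor fun _ _ h => h.ne_and_exists_unitNeighbor]
    obtain ⟨d, rfl⟩ := Nat.exists_eq_add_of_le hqp
    rcases q with _ | q
    · obtain rfl : d = j + 1 := by omega
      simp +arith [Fin.sum_univ_eight, unitNeighbor, GammaAdd, IsGammaRows, rowSum]
      simp (disch := omega) only [ih, ballot_succ_of_nonneg, ballot_eq_zero_of_lt]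
      push_cast
      ring_nf
    rcases d with _ | d
    · simp +arith [Fin.sum_univ_eight, unitNeighbor, GammaAdd, IsGammaRows, rowSum]
      simp (disch := omega) only [ih, ballot_succ_of_nonneg, ballot_of_neg]
      push_cast
      ring_nf
    · simp +arith [Fin.sum_univ_eight, unitNeighbor, GammaAdd, IsGammaRows, rowSum]
      simp (disch := omega) only [ih, ballot_succ_of_nonneg]
      push_cast
      ring_nf

def oscClosedForm (j : ℕ) (s : ℕ × ℕ × ℕ × ℕ) : ℕ :=
  if s.2.1 = 0 then (ballot j s.1 + 1).choose 2
  else if s.2.2.1 = 0 then ballot j (s.1 + s.2.1) * ballot j (s.1 - s.2.1 : ℤ)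
  else if s.2.2.2 = 0 then (ballot j s.1).choose 2
  else (ballot j 0).choose 2

theorem IsGammaRows.cases {s : ℕ × ℕ × ℕ × ℕ} (hs : IsGammaRows s) :
    (∃ a, s = (a, 0, 0, 0)) ∨ (∃ q d, s = (q + 1 + d, q + 1, 0, 0)) ∨
      (∃ a, s = (a + 1, 1, 1, 0)) ∨ s = (1, 1, 1, 1) := by
  obtain ⟨a, b, c, d⟩ := s
  obtain ⟨h1, h2, h3, h4, h5⟩ := hs
  dsimp only at *
  rcases b with _ | b
  · exact Or.inl ⟨a, by simp; omega⟩
  rcases c with _ | c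
  · exact Or.inr <| Or.inl ⟨b, a - (b + 1), by simp; omega⟩
  rcases d with _ | d
  · exact Or.inr <| Or.inr <| Or.inl ⟨a - 1, by simp; omega⟩
  · exact Or.inr <| Or.inr <| Or.inr (by simp; omega)

theorem oscClosedForm_zero {s : ℕ × ℕ × ℕ × ℕ} (hs : IsGammaRows s) :
    oscClosedForm 0 s = if s = 0 then 1 else 0 := by
  rcases hs.cases with ⟨_ | a, rfl⟩ | ⟨q, d, rfl⟩ | ⟨a, rfl⟩ | rfl <;>
    simp (disch := omega) [oscClosedForm, ballot, if_neg]

open Classical in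
theorem oscClosedForm_succ {s : ℕ × ℕ × ℕ × ℕ} (hs : IsGammaRows s) (j : ℕ) :
    oscClosedForm (j + 1) s =
      ∑ i, if GammaAdj (unitNeighbor s i) s then oscClosedForm j (unitNeighbor s i) else 0 := by
  rcases hs.cases with ⟨_ | a, rfl⟩ | ⟨_ | q, _ | d, rfl⟩ | ⟨_ | a, rfl⟩ | rfl
  -- In each of the nine cases `simp` decides which neighbours lie in `Γ(∞)`; what is left are
  -- the recursion of `ballot` and `C(x + y, 2) = C(x, 2) + C(y, 2) + x y`.
  all_goals
    simp +arith [Fin.sum_univ_eight, unitNeighbor, GammaAdj, GammaAdd, IsGammaRows, rowSum,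
      oscClosedForm]
    simp (disch := omega) only [ballot_succ_of_nonneg, ballot_of_neg]
    qify [Nat.cast_choose_two]
    ring_nf

open Classical in
theorem pathCount_gammaAdj_eq_oscClosedForm (j : ℕ) {s : ℕ × ℕ × ℕ × ℕ} (hs : IsGammaRows s) :
    pathCount GammaAdj 0 j s = oscClosedForm j s := by
  induction j generalizing s with
  | zero => rw [pathCount_zero, oscClosedForm_zero hs]
  | succ j ih =>
    rw [pathCount_succ_eq_sum_unitNeighbor (fun _ _ h => h.ne_and_exists_unitNeighbor),
      oscClosedForm_succ hs]
    exact Finset.sum_congr rfl fun i _ =>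
      ite_congr rfl (fun h => ih (h.elim (·.1) (·.2.1))) fun _ => rfl

theorem osc_count_eq_choose_succ_inf_general (m : ℕ)
    (l₁ l₂ : ℕ) (hl : l₂ ≤ l₁) (hlm : l₁ + l₂ = m) :
    oscCount GammaInf m [2 * l₁ - m]
      = Nat.choose (tabCount (fun _ => Set.univ) m [l₁, l₂] + 1) 2 := by
  rw [show 2 * l₁ - m = l₁ - l₂ by omega, oscCount_gammaInf_eq_pathCount,
    pathCount_gammaAdj_eq_oscClosedForm m (by simp [IsGammaRows]), tabCount_eq_pathCount,
    pathCount_gammaAdd_eq_ballot hl hlm]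
  simp [oscClosedForm, Nat.cast_sub hl]

/-- Theorem 2.1, equation (3) (`symdim`), for `ℓ = ∞`:
for a two-row diagram `λ = [λ₁,λ₂]` of size `m` and `ν₁ = 2λ₁ - m`,
the number of oscillating tableaux of length `m` and shape `[ν₁]` with shapes
in `Γ(∞)` equals `C(|𝒯(λ)| + 1, 2)`. -/
theorem osc_count_eq_choose_succ_inf (m : ℕ) (hm : 1 ≤ m)
    (l₁ l₂ : ℕ) (hl : l₂ ≤ l₁) (hlm : l₁ + l₂ = m) :
    oscCount GammaInf m [2 * l₁ - m]
      = Nat.choose (tabCount (fun _ => Set.univ) m [l₁, l₂] + 1) 2 :=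
  osc_count_eq_choose_succ_inf_general m l₁ l₂ hl hlm
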